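/- arXiv:2010.05846 — 4 statements merged into one kernel-verified Lean document; each statement's English description precedes it below -/
import Mathlib

section
/- Let n be a positive integer and S ⊆ [n]³ a set such that (i,i,i) ∈ S for all i ∈ [n], and every other element (i,j,k) ∈ S has i, j, k pairwise distinct. Let m := (|S| - n)/n and suppose m ≥ 1. Then there exists a subset I ⊆ [n] with |I| ≥ 2n/(3√(3m)) such that for every (i,j,k) ∈ S with i,j,k ∈ I, we have i = j = k. -/
open Finset

lemma sumpow {α : Type*} [DecidableEq α] (s : Finset α) (p q : ℝ) :
    ∑ B ∈ s.powerset, p ^ B.card * q ^ (s.card - B.card) = (p + q) ^ s.card := by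
  have h := Finset.prod_add (fun _ : α => p) (fun _ : α => q) s
  simp only [Finset.prod_const] at h
  rw [h]
  exact Finset.sum_congr rfl fun t ht => by
    rw [Finset.card_sdiff_of_subset (Finset.mem_powerset.mp ht)]

lemma key {n : ℕ} (p : ℝ) (A : Finset (Fin n)) :
    ∑ R ∈ (Finset.univ : Finset (Finset (Fin n))).filter (fun R => A ⊆ R),
      p ^ R.card * (1 - p) ^ (n - R.card) = p ^ A.card := by
  have hcard : (Finset.univ \ A).card = n - A.card := by
    rw [Finset.card_sdiff_of_subset (Finset.subset_univ A)]
    simp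
  have hstep : ∑ R ∈ (Finset.univ : Finset (Finset (Fin n))).filter (fun R => A ⊆ R),
      p ^ R.card * (1 - p) ^ (n - R.card)
      = ∑ B ∈ (Finset.univ \ A).powerset,
        p ^ A.card * (p ^ B.card * (1 - p) ^ ((Finset.univ \ A).card - B.card)) := by
    apply Finset.sum_nbij' (fun R => R \ A) (fun B => B ∪ A)
    · intro R hR
      rw [Finset.mem_powerset]
      exact Finset.sdiff_subset_sdiff (Finset.subset_univ R) le_rfl
    · intro B hB
      simp only [Finset.mem_filter, Finset.mem_univ, true_and]
      exact Finset.subset_union_right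
    · intro R hR
      simp only [Finset.mem_filter] at hR
      exact Finset.sdiff_union_of_subset hR.2
    · intro B hB
      rw [Finset.mem_powerset, Finset.subset_sdiff] at hB
      exact Finset.union_sdiff_cancel_right hB.2
    · intro R hR
      simp only [Finset.mem_filter] at hR
      have hA : A ⊆ R := hR.2
      have h1 : A.card ≤ R.card := Finset.card_le_card hA
      have h2 : R.card ≤ n := by
        simpa using Finset.card_le_card (Finset.subset_univ R)
      rw [Finset.card_sdiff_of_subset hA, ← mul_assoc, ← pow_add, hcard]
      congr 2
      · omega
      · omega
  rw [hstep, ← Finset.mul_sum, sumpow]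
  norm_num

theorem stmt_0 (n : ℕ) (hn : 0 < n) (S : Finset (Fin n × Fin n × Fin n))
    (hdiag : ∀ i : Fin n, (i, i, i) ∈ S)
    (hoff : ∀ i j k : Fin n, (i, j, k) ∈ S → ¬(i = j ∧ j = k) →
      i ≠ j ∧ j ≠ k ∧ i ≠ k)
    (m : ℝ) (hm : m = ((S.card : ℝ) - n) / n) (hm1 : 1 ≤ m) :
    ∃ I : Finset (Fin n),
      2 * (n : ℝ) / (3 * Real.sqrt (3 * m)) ≤ (I.card : ℝ) ∧
      ∀ i j k : Fin n, (i, j, k) ∈ S → i ∈ I → j ∈ I → k ∈ I → i = j ∧ j = k := by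
  classical
  set s : ℝ := Real.sqrt (3 * m) with hs
  have hm0 : (0:ℝ) ≤ 3 * m := by linarith
  have hs2 : s ^ 2 = 3 * m := Real.sq_sqrt hm0
  have hs1 : 1 < s := by
    nlinarith [Real.sqrt_nonneg (3 * m)]
  have hs0 : (0:ℝ) < s := lt_trans one_pos hs1
  set p : ℝ := 1 / s with hp
  have hp0 : (0:ℝ) < p := by positivity
  have hp1 : p < 1 := by rw [hp, div_lt_one hs0]; exact hs1
  have hq0 : (0:ℝ) < 1 - p := by linarith
  -- bad triples
  set T := S.filter (fun t => ¬(t.1 = t.2.1 ∧ t.2.1 = t.2.2)) with hT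
  have hTcard : (T.card : ℝ) = n * m := by
    have hfp : S.filter (fun t => (t.1 = t.2.1 ∧ t.2.1 = t.2.2))
        = Finset.univ.image (fun i : Fin n => (i, i, i)) := by
      ext t
      obtain ⟨a, b, c⟩ := t
      simp only [Finset.mem_filter, Finset.mem_image, Finset.mem_univ, true_and]
      constructor
      · rintro ⟨hS, h1, h2⟩
        exact ⟨a, by simp_all⟩
      · rintro ⟨i, hi⟩
        simp only [Prod.mk.injEq] at hi
        obtain ⟨rfl, rfl, rfl⟩ := hi
        exact ⟨hdiag i, rfl, rfl⟩
    have himg : (Finset.univ.image (fun i : Fin n => (i, i, i))).card = n := by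
      rw [Finset.card_image_of_injective _ (fun a b h => by injection h)]
      simp
    have hsplit := Finset.card_filter_add_card_filter_not
      (s := S) (p := fun t => (t.1 = t.2.1 ∧ t.2.1 = t.2.2))
    rw [hfp, himg] at hsplit
    have : (n : ℝ) + T.card = S.card := by
      rw [hT]
      push_cast [← hsplit]
      ring
    have hn' : (n : ℝ) ≠ 0 := Nat.cast_ne_zero.mpr hn.ne'
    field_simp at hm
    linarith
  -- weights and edge counts
  set w : Finset (Fin n) → ℝ := fun R => p ^ R.card * (1 - p) ^ (n - R.card) with hw
  have hw0 : ∀ R, 0 < w R := fun R => by positivity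
  set e : Finset (Fin n) → ℕ :=
    fun R => (T.filter (fun t => t.1 ∈ R ∧ t.2.1 ∈ R ∧ t.2.2 ∈ R)).card with he
  -- expectation computations
  have hsum1 : ∑ R ∈ (Finset.univ : Finset (Finset (Fin n))), w R = 1 := by
    have := key (n := n) p ∅
    simpa using this
  have hsumcard : ∑ R ∈ (Finset.univ : Finset (Finset (Fin n))), w R * R.card = p * n := by
    have hc : ∀ R : Finset (Fin n), ((R.card : ℝ))
        = ∑ i : Fin n, (if i ∈ R then (1:ℝ) else 0) := by
      intro R
      rw [Finset.sum_boole]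
      congr 1
      simp [Finset.filter_mem_eq_inter]
    calc ∑ R ∈ (Finset.univ : Finset (Finset (Fin n))), w R * R.card
        = ∑ R ∈ (Finset.univ : Finset (Finset (Fin n))),
            ∑ i : Fin n, (if i ∈ R then w R else 0) := by
          refine Finset.sum_congr rfl fun R _ => ?_
          rw [hc R, Finset.mul_sum]
          exact Finset.sum_congr rfl fun i _ => by split <;> simp
      _ = ∑ i : Fin n, ∑ R ∈ (Finset.univ : Finset (Finset (Fin n))),
            (if i ∈ R then w R else 0) := Finset.sum_comm
      _ = ∑ i : Fin n, p := by
          refine Finset.sum_congr rfl fun i _ => ?_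
          have hk := key (n := n) p {i}
          rw [Finset.card_singleton, pow_one] at hk
          rw [← hk, Finset.sum_filter]
          refine Finset.sum_congr rfl fun R _ => ?_
          exact if_congr Finset.singleton_subset_iff.symm rfl rfl
      _ = p * n := by simp [mul_comm]
  have hsume : ∑ R ∈ (Finset.univ : Finset (Finset (Fin n))), w R * e R
      = p ^ 3 * T.card := by
    have hc : ∀ R : Finset (Fin n), ((e R : ℝ))
        = ∑ t ∈ T, (if t.1 ∈ R ∧ t.2.1 ∈ R ∧ t.2.2 ∈ R then (1:ℝ) else 0) := by
      intro R
      rw [Finset.sum_boole]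
    calc ∑ R ∈ (Finset.univ : Finset (Finset (Fin n))), w R * e R
        = ∑ R ∈ (Finset.univ : Finset (Finset (Fin n))),
            ∑ t ∈ T, (if t.1 ∈ R ∧ t.2.1 ∈ R ∧ t.2.2 ∈ R then w R else 0) := by
          refine Finset.sum_congr rfl fun R _ => ?_
          rw [hc R, Finset.mul_sum]
          exact Finset.sum_congr rfl fun t _ => by split <;> simp
      _ = ∑ t ∈ T, ∑ R ∈ (Finset.univ : Finset (Finset (Fin n))),
            (if t.1 ∈ R ∧ t.2.1 ∈ R ∧ t.2.2 ∈ R then w R else 0) := Finset.sum_comm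
      _ = ∑ t ∈ T, p ^ 3 := by
          refine Finset.sum_congr rfl fun t ht => ?_
          obtain ⟨i, j, k⟩ := t
          rw [hT, Finset.mem_filter] at ht
          obtain ⟨h1, h2, h3⟩ := hoff i j k ht.1 ht.2
          have hA : ({i, j, k} : Finset (Fin n)).card = 3 := by
            rw [Finset.card_insert_of_notMem (by simp [h1, h3]),
              Finset.card_insert_of_notMem (by simp [h2])]
            rfl
          have hiff : ∀ R : Finset (Fin n),
              (i ∈ R ∧ j ∈ R ∧ k ∈ R) ↔ ({i, j, k} : Finset (Fin n)) ⊆ R := by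
            intro R
            simp [Finset.insert_subset_iff]
          have hk := key (n := n) p {i, j, k}
          rw [hA] at hk
          rw [← hk, Finset.sum_filter]
          refine Finset.sum_congr rfl fun R _ => ?_
          exact if_congr (hiff R) rfl rfl
      _ = p ^ 3 * T.card := by
          rw [Finset.sum_const, nsmul_eq_mul, mul_comm]
  have hgoalval : p * n - p ^ 3 * T.card = 2 * n / (3 * s) := by
    rw [hTcard, hp]
    have hmne : m ≠ 0 := by linarith
    have hsne : s ≠ 0 := hs0.ne'
    have h3 : s ^ 3 = 3 * m * s := by rw [pow_succ, hs2]
    calc 1 / s * n - (1 / s) ^ 3 * (n * m)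
        = n / s - (n * m) / (s ^ 3) := by ring
      _ = n / s - (n * m) / (3 * m * s) := by rw [h3]
      _ = n / s - n / (3 * s) := by
          congr 1
          field_simp
      _ = 2 * n / (3 * s) := by field_simp; ring
  have hexp : ∑ R ∈ (Finset.univ : Finset (Finset (Fin n))),
      w R * ((R.card : ℝ) - e R) = 2 * n / (3 * s) := by
    have : ∀ R : Finset (Fin n), w R * ((R.card : ℝ) - e R)
        = w R * R.card - w R * e R := fun R => by ring
    rw [Finset.sum_congr rfl fun R _ => this R, Finset.sum_sub_distrib,
      hsumcard, hsume, hgoalval]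
  -- choose a good R
  have hex : ∃ R : Finset (Fin n), 2 * n / (3 * s) ≤ (R.card : ℝ) - e R := by
    by_contra hcon
    push_neg at hcon
    have hlt : ∑ R ∈ (Finset.univ : Finset (Finset (Fin n))),
        w R * ((R.card : ℝ) - e R)
        < ∑ R ∈ (Finset.univ : Finset (Finset (Fin n))), w R * (2 * n / (3 * s)) := by
      refine Finset.sum_lt_sum_of_nonempty Finset.univ_nonempty fun R _ => ?_
      exact mul_lt_mul_of_pos_left (hcon R) (hw0 R)
    rw [hexp, ← Finset.sum_mul, hsum1, one_mul] at hlt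
    exact lt_irrefl _ hlt
  obtain ⟨R, hR⟩ := hex
  -- construct I
  set D := (T.filter (fun t => t.1 ∈ R ∧ t.2.1 ∈ R ∧ t.2.2 ∈ R)).image Prod.fst with hD
  refine ⟨R \ D, ?_, ?_⟩
  · have h1 : R.card ≤ (R \ D).card + D.card := Finset.card_le_card_sdiff_add_card
    have h2 : D.card ≤ e R := Finset.card_image_le
    have : (R.card : ℝ) ≤ ((R \ D).card : ℝ) + e R := by
      have := le_trans h1 (by omega : (R \ D).card + D.card ≤ (R \ D).card + e R)
      exact_mod_cast this
    linarith
  · intro i j k hijk hi hj hk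
    by_contra hne
    have hiR : i ∈ R := (Finset.mem_sdiff.mp hi).1
    have hjR : j ∈ R := (Finset.mem_sdiff.mp hj).1
    have hkR : k ∈ R := (Finset.mem_sdiff.mp hk).1
    have hiD : i ∈ D := by
      rw [hD]
      refine Finset.mem_image.mpr ⟨(i, j, k), ?_, rfl⟩
      rw [Finset.mem_filter, hT, Finset.mem_filter]
      exact ⟨⟨hijk, hne⟩, hiR, hjR, hkR⟩
    exact (Finset.mem_sdiff.mp hi).2 hiD
end

section
/- Let S be a finite set, n a positive integer, and α : S → [0,1] a function with Σ_{s∈S} α(s) = 1. Then there exists α' : S → [0,1] with Σ_{s∈S} α'(s) = 1 such that for all s ∈ S, α'(s) is an integer multiple of 1/n and |α(s) − α'(s)| < 1/n. -/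
theorem stmt_4 (S : Type*) [Fintype S] (n : ℕ) (hn : 0 < n)
    (α : S → ℝ) (hα : ∀ s, α s ∈ Set.Icc (0 : ℝ) 1) (hsum : ∑ s, α s = 1) :
    ∃ α' : S → ℝ,
      (∀ s, α' s ∈ Set.Icc (0 : ℝ) 1) ∧
      (∑ s, α' s = 1) ∧
      (∀ s, ∃ k : ℕ, α' s = (k : ℝ) / n) ∧
      (∀ s, |α s - α' s| < 1 / n) := by
  classical
  have hn' : (0:ℝ) < n := by exact_mod_cast hn
  set β : S → ℕ := fun s => ⌊(n:ℝ) * α s⌋₊ with hβ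
  have hβle : ∀ s, (β s : ℝ) ≤ (n:ℝ) * α s := fun s =>
    Nat.floor_le (by have := (hα s).1; positivity)
  have hβlt : ∀ s, (n:ℝ) * α s < β s + 1 := fun s => Nat.lt_floor_add_one _
  have hsumβ : (∑ s, (β s : ℝ)) ≤ n := by
    calc (∑ s, (β s : ℝ)) ≤ ∑ s, (n:ℝ) * α s := Finset.sum_le_sum fun s _ => hβle s
    _ = n := by rw [← Finset.mul_sum, hsum, mul_one]
  have hsumβ' : (∑ s, β s) ≤ n := by exact_mod_cast hsumβ
  set m : ℕ := n - ∑ s, β s with hm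
  set T : Finset S := Finset.univ.filter (fun s => (β s : ℝ) < (n:ℝ) * α s) with hT
  have hmcast : (m:ℝ) = (n:ℝ) - ∑ s, (β s:ℝ) := by
    rw [hm]; push_cast [hsumβ']; ring
  have hfrac : (m:ℝ) = ∑ s ∈ T, ((n:ℝ) * α s - β s) := by
    rw [hmcast]
    have : (n:ℝ) - ∑ s, (β s:ℝ) = ∑ s, ((n:ℝ) * α s - β s) := by
      rw [Finset.sum_sub_distrib, ← Finset.mul_sum, hsum, mul_one]
    rw [this]
    rw [← Finset.sum_filter_add_sum_filter_not Finset.univ (fun s => (β s:ℝ) < (n:ℝ) * α s)]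
    have h0 : ∑ s ∈ Finset.univ.filter (fun s => ¬ ((β s:ℝ) < (n:ℝ) * α s)),
        ((n:ℝ) * α s - β s) = 0 := by
      apply Finset.sum_eq_zero
      intro s hs
      simp only [Finset.mem_filter] at hs
      have := hβle s
      linarith [hs.2, this]
    rw [h0, add_zero]
  have hmle : m ≤ T.card := by
    rcases Nat.eq_zero_or_pos m with h0 | hpos
    · simp [h0]
    · have hTne : T.Nonempty := by
        by_contra h
        rw [Finset.not_nonempty_iff_eq_empty] at h
        rw [h, Finset.sum_empty] at hfrac
        have : (0:ℝ) < m := by exact_mod_cast hpos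
        linarith
      have : (m:ℝ) < T.card := by
        rw [hfrac]
        calc ∑ s ∈ T, ((n:ℝ) * α s - β s) < ∑ s ∈ T, (1:ℝ) := by
              apply Finset.sum_lt_sum_of_nonempty hTne
              intro s hs
              have := hβlt s
              linarith
        _ = T.card := by simp
      exact_mod_cast this.le
  obtain ⟨T', hT'sub, hT'card⟩ := Finset.exists_subset_card_eq hmle
  refine ⟨fun s => ((β s : ℝ) + if s ∈ T' then 1 else 0) / n, ?_, ?_, ?_, ?_⟩
  · intro s
    constructor
    · apply div_nonneg _ hn'.le
      positivity
    · rw [div_le_one hn']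
      by_cases hs : s ∈ T'
      · have hsT : s ∈ T := hT'sub hs
        simp only [hT, Finset.mem_filter] at hsT
        have h1 : (β s : ℝ) < n := lt_of_lt_of_le hsT.2 (by
          have := (hα s).2
          nlinarith)
        have : β s < n := by exact_mod_cast h1
        simp only [hs, if_pos]
        have : β s + 1 ≤ n := this
        exact_mod_cast this
      · simp only [hs, if_neg, not_false_iff, add_zero]
        calc (β s : ℝ) ≤ (n:ℝ) * α s := hβle s
        _ ≤ n := by have := (hα s).2; nlinarith
  · rw [← Finset.sum_div]
    rw [Finset.sum_add_distrib]
    have h1 : ∑ s, (if s ∈ T' then (1:ℝ) else 0) = T'.card := by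
      simp [Finset.sum_ite_mem]
    rw [h1, hT'card, div_eq_one_iff_eq (ne_of_gt hn')]
    rw [hmcast]; ring
  · intro s
    by_cases hs : s ∈ T'
    · exact ⟨β s + 1, by simp [hs]⟩
    · exact ⟨β s, by simp [hs]⟩
  · intro s
    rw [abs_lt]
    have hd : α s - ((β s : ℝ) + if s ∈ T' then 1 else 0) / n
        = ((n:ℝ) * α s - β s - if s ∈ T' then 1 else 0) / n := by
      field_simp; ring
    rw [hd]
    have hinv : (1/(n:ℝ))*n = 1 := by field_simp
    constructor
    · have key : -1 < (n:ℝ) * α s - β s - (if s ∈ T' then 1 else 0) := by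
        by_cases hs : s ∈ T'
        · rw [if_pos hs]
          have hsT : s ∈ T := hT'sub hs
          simp only [hT, Finset.mem_filter] at hsT
          linarith [hsT.2]
        · rw [if_neg hs]; have := hβle s; linarith
      rw [lt_div_iff₀ hn', neg_mul]
      linarith
    · have key2 : (n:ℝ) * α s - β s - (if s ∈ T' then 1 else 0) < 1 := by
        have := hβlt s
        by_cases hs : s ∈ T'
        · rw [if_pos hs]; linarith
        · rw [if_neg hs]; linarith
      rw [div_lt_div_iff₀ hn' hn', one_mul]
      nlinarith [key2, hn']
end

section
/- Let C_M be the tensor over variable sets {x₀,...,x_{M−1}}, {y₀,...,y_{M−1}}, {z₀,...,z_{M−1}} (for odd prime M) defined by C_M = Σ_{i=0}^{M−1} Σ_{j=0}^{M−1} xᵢ·yⱼ·z_{(i+j)/2 mod M}. If A ⊆ ℤ_M satisfies: a+b = 2c (mod M) implies a=b=c for all a,b,c ∈ A, then zeroing out all xᵢ, yᵢ, zᵢ with i ∉ A transforms C_M into the diagonal tensor Σ_{i∈A} xᵢyᵢzᵢ. -/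
theorem stmt_9 (M : ℕ) [NeZero M] (hM : M.Prime) (hModd : Odd M)
    (A : Finset (ZMod M))
    (hA : ∀ a b c : ZMod M, a ∈ A → b ∈ A → c ∈ A → a + b = 2 * c → a = b ∧ b = c)
    (CM : ZMod M → ZMod M → ZMod M → ℚ)
    (hCM : ∀ i j k, CM i j k = if k = (i + j) * (2 : ZMod M)⁻¹ then 1 else 0) :
    ∀ i j k : ZMod M,
      (if i ∈ A ∧ j ∈ A ∧ k ∈ A then CM i j k else 0) =
      (if i ∈ A ∧ i = j ∧ j = k then 1 else 0) := by
  haveI : Fact M.Prime := ⟨hM⟩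
  have h2 : (2 : ZMod M) ≠ 0 := by
    intro h
    have h2' : ((2 : ℕ) : ZMod M) = 0 := by exact_mod_cast h
    rw [ZMod.natCast_eq_zero_iff] at h2'
    have := hM.two_le
    have hle := Nat.le_of_dvd two_pos h2'
    rcases hModd with ⟨k, hk⟩
    omega
  have hinv : ∀ i j k : ZMod M, k = (i + j) * (2 : ZMod M)⁻¹ ↔ i + j = 2 * k := by
    intro i j k
    constructor
    · intro h; rw [h]; field_simp
    · intro h; rw [h]; field_simp
  intro i j k
  by_cases hmem : i ∈ A ∧ j ∈ A ∧ k ∈ A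
  · rw [if_pos hmem, hCM]
    by_cases heq : k = (i + j) * (2 : ZMod M)⁻¹
    · rw [if_pos heq]
      obtain ⟨hij, hjk⟩ := hA i j k hmem.1 hmem.2.1 hmem.2.2 ((hinv i j k).mp heq)
      rw [if_pos ⟨hmem.1, hij, hjk⟩]
    · rw [if_neg heq, if_neg]
      rintro ⟨_, hij, hjk⟩
      exact heq ((hinv i j k).mpr (by rw [hij, hjk]; ring))
  · rw [if_neg hmem, if_neg]
    rintro ⟨hi, hij, hjk⟩
    exact hmem ⟨hi, hij ▸ hi, hjk ▸ hij ▸ hi⟩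
end

section
/- Suppose G is a 3-uniform hypergraph on vertex set [n] in which every vertex is contained in at most R hyperedges, and the total number of pairs of hyperedges sharing at least one vertex is C₂. Consider the process: while some vertex is contained in g ≥ 2 hyperedges, delete that vertex (and all hyperedges containing it). Then the total number of hyperedges deleted throughout the process is at most 2·C₂. -/
/-!
Deleting a vertex `v` lying in `g ≥ 2` hyperedges destroys `g` hyperedges, while the `g (g - 1) ≥ g`
ordered pairs of distinct hyperedges through `v` are intersecting pairs that disappear with them.
Pairs surviving the deletion are never charged again, so over the whole process the number of
deleted hyperedges is at most the number of ordered intersecting pairs, which is `2 C₂`.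
-/

/-- Delete from the hypergraph `G` all hyperedges containing the vertex `v`. -/
def deleteVertex {n : ℕ} (G : Finset (Finset (Fin n))) (v : Fin n) :
    Finset (Finset (Fin n)) :=
  G.filter fun e => v ∉ e

/-- Run the deletion process along a list of chosen vertices. -/
def runProcess {n : ℕ} (G : Finset (Finset (Fin n))) :
    List (Fin n) → Finset (Finset (Fin n))
  | [] => G
  | v :: l => runProcess (deleteVertex G v) l

/-- The process is valid: each chosen vertex is, at the moment it is chosen,
contained in at least 2 of the currently remaining hyperedges. -/
def ValidProcess {n : ℕ} (G : Finset (Finset (Fin n))) : List (Fin n) → Prop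
  | [] => True
  | v :: l => 2 ≤ (G.filter fun e => v ∈ e).card ∧ ValidProcess (deleteVertex G v) l

open Finset

def intersectingPairs {α : Type*} [DecidableEq α] (G : Finset (Finset α)) :
    Finset (Finset α × Finset α) :=
  (G ×ˢ G).filter fun p => p.1 ≠ p.2 ∧ (p.1 ∩ p.2).Nonempty

lemma card_deleteVertex_add_card_filter_mem {n : ℕ} (G : Finset (Finset (Fin n))) (v : Fin n) :
    (deleteVertex G v).card + (G.filter fun e => v ∈ e).card = G.card := by
  rw [add_comm]
  exact card_filter_add_card_filter_not _

lemma intersectingPairs_deleteVertex_subset {n : ℕ} (G : Finset (Finset (Fin n))) (v : Fin n) :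
    intersectingPairs (deleteVertex G v) ⊆ intersectingPairs G :=
  filter_subset_filter _ (product_subset_product (filter_subset _ _) (filter_subset _ _))

lemma offDiag_filter_mem_subset_intersectingPairs {n : ℕ} (G : Finset (Finset (Fin n)))
    (v : Fin n) : (G.filter fun e => v ∈ e).offDiag ⊆ intersectingPairs G := by
  intro p hp
  obtain ⟨⟨hp₁, hv₁⟩, ⟨hp₂, hv₂⟩, hne⟩ := by simpa only [mem_offDiag, mem_filter] using hp
  exact mem_filter.2 ⟨mem_product.2 ⟨hp₁, hp₂⟩, hne, v, mem_inter.2 ⟨hv₁, hv₂⟩⟩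

lemma disjoint_intersectingPairs_deleteVertex_offDiag {n : ℕ} (G : Finset (Finset (Fin n)))
    (v : Fin n) :
    Disjoint (intersectingPairs (deleteVertex G v)) (G.filter fun e => v ∈ e).offDiag := by
  refine disjoint_left.2 fun p hp hp' => ?_
  have hv : v ∉ p.1 := (mem_filter.1 (mem_product.1 (mem_filter.1 hp).1).1).2
  exact hv (mem_filter.1 (mem_offDiag.1 hp').1).2

lemma card_filter_mem_add_card_intersectingPairs_deleteVertex_le {n : ℕ}
    (G : Finset (Finset (Fin n))) (v : Fin n) (hv : 2 ≤ (G.filter fun e => v ∈ e).card) :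
    (G.filter fun e => v ∈ e).card + (intersectingPairs (deleteVertex G v)).card ≤
      (intersectingPairs G).card := by
  set g := (G.filter fun e => v ∈ e).card
  have hg : g ≤ (G.filter fun e => v ∈ e).offDiag.card := by
    rw [offDiag_card]
    exact Nat.le_sub_of_add_le (by nlinarith)
  calc g + (intersectingPairs (deleteVertex G v)).card
      ≤ (G.filter fun e => v ∈ e).offDiag.card + (intersectingPairs (deleteVertex G v)).card :=
        Nat.add_le_add_right hg _
    _ = (intersectingPairs (deleteVertex G v) ∪ (G.filter fun e => v ∈ e).offDiag).card := by
        rw [card_union_of_disjoint (disjoint_intersectingPairs_deleteVertex_offDiag G v),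
          add_comm]
    _ ≤ (intersectingPairs G).card :=
        card_le_card (union_subset (intersectingPairs_deleteVertex_subset G v)
          (offDiag_filter_mem_subset_intersectingPairs G v))

lemma card_le_card_runProcess_add_card_intersectingPairs {n : ℕ} (G : Finset (Finset (Fin n)))
    (vs : List (Fin n)) (hvalid : ValidProcess G vs) :
    G.card ≤ (runProcess G vs).card + (intersectingPairs G).card := by
  induction vs generalizing G with
  | nil => exact Nat.le_add_right _ _
  | cons v vs ih =>
    obtain ⟨hv, hvalid⟩ := hvalid
    have hrest := ih (deleteVertex G v) hvalid
    have hstep := card_filter_mem_add_card_intersectingPairs_deleteVertex_le G v hv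
    have hsplit := card_deleteVertex_add_card_filter_mem G v
    simp only [runProcess]
    omega

theorem stmt_14_general (n C₂ : ℕ) (G : Finset (Finset (Fin n)))
    (hC₂ : ((G ×ˢ G).filter fun p => p.1 ≠ p.2 ∧ (p.1 ∩ p.2).Nonempty).card = 2 * C₂)
    (vs : List (Fin n)) (hvalid : ValidProcess G vs) :
    G.card - (runProcess G vs).card ≤ 2 * C₂ := by
  have h := card_le_card_runProcess_add_card_intersectingPairs G vs hvalid
  rw [intersectingPairs, hC₂] at h
  omega

theorem stmt_14 (n R C₂ : ℕ) (G : Finset (Finset (Fin n)))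
    (huniform : ∀ e ∈ G, e.card = 3)
    (hdeg : ∀ v : Fin n, (G.filter fun e => v ∈ e).card ≤ R)
    (hC₂ : ((G ×ˢ G).filter fun p => p.1 ≠ p.2 ∧ (p.1 ∩ p.2).Nonempty).card = 2 * C₂)
    (vs : List (Fin n)) (hvalid : ValidProcess G vs)
    (hdone : ∀ v : Fin n, ((runProcess G vs).filter fun e => v ∈ e).card ≤ 1) :
    G.card - (runProcess G vs).card ≤ 2 * C₂ :=
  stmt_14_general n C₂ G hC₂ vs hvalid
end
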